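/- Let I ⊆ ℝ be a nonempty open interval, κ ∈ ℝ with κ ≠ 0, n ≥ 1 an integer, c_1,…,c_n ∈ ℝ, and let y, x̂_1,…,x̂_n, r : ℝ → ℝ be infinitely differentiable with y(t) ≠ 0 on I, and such that on I: x̂_i′(t) = −κ c_i y(t) x̂_i(t) for each i, r′(t) = −κ r(t), and y′(t) = κ y(t) Σ_{i=1}^n c_i x̂_i(t) + κ r(t). Then for every integer k ≥ 1 and all t ∈ I, Σ_{i=1}^n c_i^k x̂_i(t) = α_k(t) − r(t) β_k(t). -/

import Mathlib

/-- The recursively defined functions `f_{(j,k)}`: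
`f_{(1,1)}(t) = κ y(t)`, `f_{(j,k)} = (f_{(j,k−1)})′ − κ y f_{(j−1,k−1)}` for `(j,k) ≠ (1,1)`,
and `f_{(j,k)} = 0` whenever `j > k` or `j = 0` or `k = 0`. -/
noncomputable def fjk (κ : ℝ) (y : ℝ → ℝ) : ℕ → ℕ → ℝ → ℝ
  | 0, _ => 0
  | _, 0 => 0
  | 1, 1 => fun t => κ * y t
  | j + 1, k + 1 =>
    if j + 1 > k + 1 then 0
    else fun t => deriv (fjk κ y (j + 1) k) t - κ * y t * fjk κ y j k t
  termination_by j k => k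

/-- The moment functions `α_k`: `α_0 = 1 − y`, `α_1 = y′/(κ y)`, and for `k ≥ 2`,
`α_k = (y^{(k)} − Σ_{j=1}^{k−1} f_{(j,k)} α_j) / ((−1)^{k+1} κ^k y^k)`. -/
noncomputable def alphaF (κ : ℝ) (y : ℝ → ℝ) : ℕ → ℝ → ℝ
  | 0 => fun t => 1 - y t
  | 1 => fun t => deriv y t / (κ * y t)
  | k + 2 => fun t =>
      (iteratedDeriv (k + 2) y t -
        ∑ j ∈ (Finset.Icc 1 (k + 1)).attach,
          fjk κ y j.1 (k + 2) t * alphaF κ y j.1 t) /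
      ((-1 : ℝ) ^ (k + 3) * κ ^ (k + 2) * (y t) ^ (k + 2))
  termination_by k => k
  decreasing_by
    have := (Finset.mem_Icc.mp j.2).2
    omega

/-- The functions `β_k`: `β_0 = 1`, `β_1 = 1/y`, and for `k ≥ 2`,
`β_k = (−Σ_{j=1}^{k−1} f_{(j,k)} β_j + (−1)^{k−1} κ^k) / ((−1)^{k+1} κ^k y^k)`. -/
noncomputable def betaF (κ : ℝ) (y : ℝ → ℝ) : ℕ → ℝ → ℝ
  | 0 => fun _ => 1
  | 1 => fun t => 1 / y t
  | k + 2 => fun t =>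
      (-(∑ j ∈ (Finset.Icc 1 (k + 1)).attach,
          fjk κ y j.1 (k + 2) t * betaF κ y j.1 t) +
        (-1 : ℝ) ^ (k + 1) * κ ^ (k + 2)) /
      ((-1 : ℝ) ^ (k + 3) * κ ^ (k + 2) * (y t) ^ (k + 2))
  termination_by k => k
  decreasing_by
    have := (Finset.mem_Icc.mp j.2).2
    omega

section Aux

variable {κ : ℝ} {y : ℝ → ℝ}

lemma fjk_zero_left (k : ℕ) : fjk κ y 0 k = 0 := fjk.eq_1 κ y k

lemma fjk_zero_right (j : ℕ) : fjk κ y j 0 = 0 := by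
  cases j with
  | zero => exact fjk.eq_1 κ y 0
  | succ j => exact fjk.eq_2 κ y (j+1) (by omega)

lemma fjk_one_one : fjk κ y 1 1 = fun t => κ * y t := fjk.eq_3 κ y

lemma fjk_rec (j k : ℕ) (hj : j ≤ k + 1) :
    fjk κ y (j+1) (k+2) =
      fun t => deriv (fjk κ y (j+1) (k+1)) t - κ * y t * fjk κ y j (k+1) t := by
  rw [fjk.eq_4 κ y j (k+1) (fun _ h => (Nat.succ_ne_zero k h).elim)]
  rw [if_neg (by omega)]

lemma fjk_gt : ∀ {j k : ℕ}, k < j → fjk κ y j k = 0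
  | 0, _, h => by omega
  | j+1, 0, _ => fjk_zero_right _
  | j+1, k+1, h => by rw [fjk.eq_4 κ y j k (by omega), if_pos (by omega)]

lemma smooth_deriv {f : ℝ → ℝ} (h : ContDiff ℝ (⊤ : ℕ∞) f) : ContDiff ℝ (⊤ : ℕ∞) (deriv f) :=
  (contDiff_succ_iff_deriv (n := ((⊤ : ℕ∞) : WithTop ℕ∞)).mp (h.of_le (by simp))).2.2.of_le le_rfl

lemma deriv_zero_fun (t : ℝ) : deriv (0 : ℝ → ℝ) t = 0 := by
  simp only [Pi.zero_def, deriv_const']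

lemma fjk_smooth (hy : ContDiff ℝ (⊤ : ℕ∞) y) : ∀ k j, ContDiff ℝ (⊤ : ℕ∞) (fjk κ y j k) := by
  intro k
  induction k with
  | zero => intro j; rw [fjk_zero_right]; exact contDiff_const
  | succ k ih =>
    intro j
    match j, k with
    | 0, k => rw [fjk_zero_left]; exact contDiff_const
    | 1, 0 => rw [fjk_one_one]; exact contDiff_const.mul hy
    | j+2, 0 => rw [fjk_gt (by omega)]; exact contDiff_const
    | j+1, k+1 =>
      by_cases h : j ≤ k + 1
      · rw [fjk_rec j k h]
        exact (smooth_deriv (ih (j+1))).sub ((contDiff_const.mul hy).mul (ih j))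
      · rw [fjk_gt (by omega)]; exact contDiff_const

lemma fjk_diag (k : ℕ) :
    fjk κ y (k+1) (k+1) = fun t => (-1 : ℝ) ^ k * κ ^ (k+1) * y t ^ (k+1) := by
  induction k with
  | zero => rw [fjk_one_one]; funext t; simp
  | succ k ih =>
    rw [fjk_rec (k+1) k (by omega)]
    funext t
    rw [fjk_gt (by omega), ih]
    simp only [Pi.zero_def, deriv_const']
    ring

lemma sum_attach_Icc (F : ℕ → ℝ) (m : ℕ) :
    ∑ j ∈ (Finset.Icc 1 (m+1)).attach, F j.1 = ∑ j ∈ Finset.range (m+1), F (j+1) := by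
  rw [Finset.sum_attach (Finset.Icc 1 (m+1)) F, ← Finset.Ico_add_one_right_eq_Icc,
    Finset.sum_Ico_eq_sum_range]
  simp [add_comm]

end Aux

section Main

variable {a b κ : ℝ} {n : ℕ} {c : Fin n → ℝ} {y r : ℝ → ℝ} {x : Fin n → ℝ → ℝ}

lemma key_identity (hκ : κ ≠ 0)
    (hy : ContDiff ℝ (⊤ : ℕ∞) y) (hr : ContDiff ℝ (⊤ : ℕ∞) r) (hx : ∀ i, ContDiff ℝ (⊤ : ℕ∞) (x i))
    (hxode : ∀ t ∈ Set.Ioo a b, ∀ i, deriv (x i) t = -κ * c i * y t * x i t)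
    (hrode : ∀ t ∈ Set.Ioo a b, deriv r t = -κ * r t)
    (hyode : ∀ t ∈ Set.Ioo a b, deriv y t = κ * y t * (∑ i, c i * x i t) + κ * r t) :
    ∀ k : ℕ, ∀ t ∈ Set.Ioo a b,
      iteratedDeriv (k+1) y t =
        (∑ j ∈ Finset.range (k+1), fjk κ y (j+1) (k+1) t * ∑ i, c i ^ (j+1) * x i t)
          + (-1:ℝ)^k * κ^(k+1) * r t := by
  have hS : ∀ m : ℕ, ContDiff ℝ (⊤ : ℕ∞) (fun s => ∑ i, c i ^ m * x i s) := fun m =>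
    ContDiff.sum fun i _ => contDiff_const.mul (hx i)
  have hSd : ∀ m : ℕ, ∀ t ∈ Set.Ioo a b,
      deriv (fun s => ∑ i, c i ^ m * x i s) t = -κ * y t * ∑ i, c i ^ (m+1) * x i t := by
    intro m t ht
    rw [deriv_fun_sum (fun i _ => (((hx i).differentiable (by simp)).differentiableAt).const_mul _)]
    rw [Finset.mul_sum]
    refine Finset.sum_congr rfl fun i _ => ?_
    rw [deriv_const_mul _ ((hx i).differentiable (by simp)).differentiableAt, hxode t ht i]
    ring
  intro k
  induction k with
  | zero =>
    intro t ht
    rw [iteratedDeriv_one, hyode t ht, Finset.sum_range_one]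
    simp only [zero_add, fjk_one_one, pow_one, pow_zero]
    ring
  | succ k ih =>
    intro t ht
    have hg : iteratedDeriv (k+1) y =ᶠ[nhds t] fun s =>
        (∑ j ∈ Finset.range (k+1), fjk κ y (j+1) (k+1) s * ∑ i, c i ^ (j+1) * x i s)
          + (-1:ℝ)^k * κ^(k+1) * r s :=
      Filter.eventually_of_mem (isOpen_Ioo.mem_nhds ht) (fun s hs => ih s hs)
    rw [iteratedDeriv_succ, hg.deriv_eq]
    have hdiff : ∀ j : ℕ,
        DifferentiableAt ℝ (fun s => fjk κ y (j+1) (k+1) s * ∑ i, c i ^ (j+1) * x i s) t :=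
      fun j => (((fjk_smooth hy (k+1) (j+1)).differentiable (by simp) t).mul
        ((hS (j+1)).differentiable (by simp) t))
    rw [deriv_fun_add (DifferentiableAt.fun_sum fun j _ => hdiff j)
      (((hr.differentiable (by simp)) t).const_mul _)]
    rw [deriv_fun_sum (fun j _ => hdiff j), deriv_const_mul _ ((hr.differentiable (by simp)) t),
      hrode t ht]
    have hterm : ∀ j ∈ Finset.range (k+1),
        deriv (fun s => fjk κ y (j+1) (k+1) s * ∑ i, c i ^ (j+1) * x i s) t
          = deriv (fjk κ y (j+1) (k+1)) t * (∑ i, c i ^ (j+1) * x i t)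
            + -(κ * y t * (fjk κ y (j+1) (k+1) t * (∑ i, c i ^ (j+2) * x i t))) := by
      intro j _
      rw [deriv_fun_mul ((fjk_smooth hy (k+1) (j+1)).differentiable (by simp) t)
        ((hS (j+1)).differentiable (by simp) t), hSd (j+1) t ht]
      ring
    rw [Finset.sum_congr rfl hterm, Finset.sum_add_distrib, Finset.sum_neg_distrib]
    have e2 : ∀ j : ℕ, j + 1 + 1 = j + 2 := fun _ => rfl
    -- right-hand side manipulation
    have h1 : ∑ j ∈ Finset.range (k+2), fjk κ y (j+1) (k+2) t * (∑ i, c i ^ (j+1) * x i t)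
        = ∑ j ∈ Finset.range (k+2),
            (deriv (fjk κ y (j+1) (k+1)) t * (∑ i, c i ^ (j+1) * x i t)
              - κ * y t * (fjk κ y j (k+1) t * (∑ i, c i ^ (j+1) * x i t))) :=
      Finset.sum_congr rfl (fun j hj => by
        rw [fjk_rec j k (Nat.lt_succ_iff.mp (Finset.mem_range.mp hj))]; ring)
    have hR : ∑ j ∈ Finset.range (k+2), fjk κ y (j+1) (k+2) t * (∑ i, c i ^ (j+1) * x i t)
        = (∑ j ∈ Finset.range (k+1),
            deriv (fjk κ y (j+1) (k+1)) t * (∑ i, c i ^ (j+1) * x i t))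
          - ∑ j ∈ Finset.range (k+1),
              κ * y t * (fjk κ y (j+1) (k+1) t * (∑ i, c i ^ (j+2) * x i t)) := by
      rw [h1, Finset.sum_sub_distrib]
      congr 1
      · rw [Finset.sum_range_succ]
        rw [show fjk κ y (k+1+1) (k+1) = 0 from fjk_gt (by omega), deriv_zero_fun,
          zero_mul, add_zero]
      · rw [Finset.sum_range_succ'
          (fun j => κ * y t * (fjk κ y j (k+1) t * (∑ i, c i ^ (j+1) * x i t))) (k+1)]
        rw [fjk_zero_left]
        simp only [Pi.zero_apply, zero_mul, mul_zero, add_zero, e2]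
    rw [hR]
    ring

lemma beta_sum (hκ : κ ≠ 0) (hy0 : ∀ t ∈ Set.Ioo a b, y t ≠ 0) :
    ∀ k : ℕ, ∀ t ∈ Set.Ioo a b,
      ∑ j ∈ Finset.range (k+1), fjk κ y (j+1) (k+1) t * betaF κ y (j+1) t
        = (-1:ℝ)^k * κ^(k+1) := by
  intro k t ht
  have hyt := hy0 t ht
  cases k with
  | zero =>
    rw [Finset.sum_range_one]
    simp only [zero_add, fjk_one_one, betaF.eq_2, pow_zero, pow_one]
    field_simp
  | succ k =>
    have hD : ((-1:ℝ)^(k+3) * κ^(k+2) * (y t)^(k+2)) ≠ 0 :=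
      mul_ne_zero (mul_ne_zero (pow_ne_zero _ (by norm_num)) (pow_ne_zero _ hκ))
        (pow_ne_zero _ hyt)
    have e2 : ∀ j : ℕ, j + 1 + 1 = j + 2 := fun _ => rfl
    have hb : betaF κ y (k+2) t
        = (-(∑ j ∈ Finset.range (k+1), fjk κ y (j+1) (k+2) t * betaF κ y (j+1) t)
            + (-1:ℝ)^(k+1) * κ^(k+2)) / ((-1:ℝ)^(k+3) * κ^(k+2) * (y t)^(k+2)) := by
      simp only [betaF.eq_3]
      rw [sum_attach_Icc (fun j => fjk κ y j (k+2) t * betaF κ y j t) k]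
    rw [Finset.sum_range_succ]
    simp only [e2]
    rw [fjk_diag (k+1), hb]
    field_simp
    ring

/-- On a nonempty open interval on which `y ≠ 0`, `x̂_i′ = −κ c_i y x̂_i`, `r′ = −κ r`, and
`y′ = κ y Σ_i c_i x̂_i + κ r`, one has `Σ_{i=1}^n c_i^k x̂_i(t) = α_k(t) − r(t) β_k(t)`
for every `k ≥ 1`. -/
theorem stmt_7 (a b : ℝ) (hab : a < b) (κ : ℝ) (hκ : κ ≠ 0) (n : ℕ) (hn : 1 ≤ n)
    (c : Fin n → ℝ) (y r : ℝ → ℝ) (x : Fin n → ℝ → ℝ)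
    (hy : ContDiff ℝ (⊤ : ℕ∞) y) (hr : ContDiff ℝ (⊤ : ℕ∞) r) (hx : ∀ i, ContDiff ℝ (⊤ : ℕ∞) (x i))
    (hy0 : ∀ t ∈ Set.Ioo a b, y t ≠ 0)
    (hxode : ∀ t ∈ Set.Ioo a b, ∀ i, deriv (x i) t = -κ * c i * y t * x i t)
    (hrode : ∀ t ∈ Set.Ioo a b, deriv r t = -κ * r t)
    (hyode : ∀ t ∈ Set.Ioo a b, deriv y t = κ * y t * (∑ i, c i * x i t) + κ * r t) :
    ∀ k : ℕ, 1 ≤ k → ∀ t ∈ Set.Ioo a b,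
      ∑ i, (c i) ^ k * x i t = alphaF κ y k t - r t * betaF κ y k t := by
  intro k
  induction k using Nat.strong_induction_on with
  | _ k ih =>
    intro hk t ht
    have hyt := hy0 t ht
    match k, hk with
    | 1, _ =>
      simp only [alphaF, betaF, pow_one]
      rw [hyode t ht]
      field_simp
      ring
    | (m+2), _ =>
      have e2 : ∀ j : ℕ, j + 1 + 1 = j + 2 := fun _ => rfl
      have hD : ((-1:ℝ)^(m+3) * κ^(m+2) * (y t)^(m+2)) ≠ 0 :=
        mul_ne_zero (mul_ne_zero (pow_ne_zero _ (by norm_num)) (pow_ne_zero _ hκ))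
          (pow_ne_zero _ hyt)
      have halpha : alphaF κ y (m+2) t
          = (iteratedDeriv (m+2) y t
              - ∑ j ∈ Finset.range (m+1), fjk κ y (j+1) (m+2) t * alphaF κ y (j+1) t)
            / ((-1:ℝ)^(m+3) * κ^(m+2) * (y t)^(m+2)) := by
        simp only [alphaF.eq_3]
        rw [sum_attach_Icc (fun j => fjk κ y j (m+2) t * alphaF κ y j t) m]
      have hIH : ∀ j ∈ Finset.range (m+1),
          alphaF κ y (j+1) t = (∑ i, c i ^ (j+1) * x i t) + r t * betaF κ y (j+1) t := by
        intro j hj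
        have hjm := Finset.mem_range.mp hj
        have := ih (j+1) (by omega) (by omega) t ht
        linarith
      have hsum : ∑ j ∈ Finset.range (m+1), fjk κ y (j+1) (m+2) t * alphaF κ y (j+1) t
          = (∑ j ∈ Finset.range (m+1), fjk κ y (j+1) (m+2) t * (∑ i, c i ^ (j+1) * x i t))
            + r t * ∑ j ∈ Finset.range (m+1), fjk κ y (j+1) (m+2) t * betaF κ y (j+1) t := by
        rw [Finset.mul_sum, ← Finset.sum_add_distrib]
        exact Finset.sum_congr rfl fun j hj => by rw [hIH j hj]; ring
      have hkey := key_identity hκ hy hr hx hxode hrode hyode (m+1) t ht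
      rw [Finset.sum_range_succ] at hkey
      simp only [e2] at hkey
      rw [fjk_diag (m+1)] at hkey
      have hbs := beta_sum hκ hy0 (m+1) t ht
      rw [Finset.sum_range_succ] at hbs
      simp only [e2] at hbs
      rw [fjk_diag (m+1)] at hbs
      have halg : alphaF κ y (m+2) t
          = (∑ i, c i ^ (m+2) * x i t) + r t * betaF κ y (m+2) t := by
        rw [halpha, hkey, hsum, div_eq_iff hD]
        linear_combination (-(r t)) * hbs
      rw [halg]
      ring

end Main
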